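/- Let G be a beer graph with an edge (u,v), and suppose the vertex set V of G is the union of sets V₁ and V₂ with V₁ ∩ V₂ = {u,v}, such that no edge of G joins a vertex of V₁ \ {u,v} to a vertex of V₂ \ {u,v}. Let G₁ and G₂ be the induced subgraphs of G on V₁ and V₂ (each containing the edge (u,v)), with beer stores B ∩ V₁ and B ∩ V₂ respectively. If dist(u,v) = ω(u,v) in G, then dist_B(u,v) = min( dist_B(u,v,G₁) , dist_B(u,v,G₂) ) and dist_B(u,u) = min( dist_B(u,u,G₁) , dist_B(u,u,G₂) ). -/

import Mathlib

open scoped ENNReal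

/-- The weight of a walk: the sum, with multiplicity, of the weights of its edges. -/
noncomputable def walkWeight {V : Type*} (ω : V → V → ℝ≥0∞) {G : SimpleGraph V}
    {u v : V} (p : G.Walk u v) : ℝ≥0∞ :=
  (p.darts.map fun d => ω d.toProd.1 d.toProd.2).sum

/-- The (weighted) distance: the infimum in ℝ≥0∞ of the weights of all walks. -/
noncomputable def gDist {V : Type*} (G : SimpleGraph V) (ω : V → V → ℝ≥0∞) (u v : V) : ℝ≥0∞ :=
  ⨅ p : G.Walk u v, walkWeight ω p

/-- The beer distance: the infimum in ℝ≥0∞ of the weights of all walks visiting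
a vertex of `B`. -/
noncomputable def beerDist {V : Type*} (G : SimpleGraph V) (ω : V → V → ℝ≥0∞)
    (B : Set V) (u v : V) : ℝ≥0∞ :=
  ⨅ (p : G.Walk u v) (_ : ∃ b ∈ B, b ∈ p.support), walkWeight ω p

/-- The subgraph of G induced by a set S of vertices (kept on the same vertex type):
its edges are the edges of G with both endpoints in S. -/
def restrictGraph {V : Type*} (G : SimpleGraph V) (S : Set V) : SimpleGraph V where
  Adj a b := G.Adj a b ∧ a ∈ S ∧ b ∈ S
  symm := ⟨fun a b h => ⟨h.1.symm, h.2.2, h.2.1⟩⟩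
  loopless := ⟨fun a h => G.irrefl h.1⟩

/-!
Let `S` be one of the two sides. A walk of `G` between vertices of `S` can only leave `S` and
come back through the separator `{u, v}`. An excursion that returns to its exit vertex is cut
out; one that goes from `u` to `v` (or back) weighs at least `dist(u, v) = ω(u, v)`, so it is
replaced by the edge `uv`, which lies in both sides. The resulting walk of the induced
subgraph is no heavier and still passes through every vertex of `S` the original one visited.
A beer walk of `G` visits a beer store in `V₁` or in `V₂`; projecting it to that side gives a beer
walk there, which is the nontrivial inequality.
-/

open SimpleGraph

section

variable {V : Type*} {G : SimpleGraph V} (ω : V → V → ℝ≥0∞)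

@[simp] lemma walkWeight_nil {u : V} : walkWeight ω (Walk.nil : G.Walk u u) = 0 := rfl

@[simp] lemma walkWeight_cons {a b c : V} (h : G.Adj a b) (p : G.Walk b c) :
    walkWeight ω (Walk.cons h p) = ω a b + walkWeight ω p := by
  simp [walkWeight]

lemma walkWeight_append {a b c : V} (p : G.Walk a b) (q : G.Walk b c) :
    walkWeight ω (p.append q) = walkWeight ω p + walkWeight ω q := by
  simp [walkWeight, Walk.darts_append]

lemma walkWeight_reverse (hsymm : ∀ a b, ω a b = ω b a) {a b : V} (p : G.Walk a b) :
    walkWeight ω p.reverse = walkWeight ω p := by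
  induction p with
  | nil => rfl
  | cons h p ih => simp [walkWeight_append, ih, hsymm, add_comm]

lemma walkWeight_mapLe {G' : SimpleGraph V} (hle : G ≤ G') {a b : V} (p : G.Walk a b) :
    walkWeight ω (p.mapLe hle) = walkWeight ω p := by
  induction p with
  | nil => rfl
  | cons h p ih =>
    simp only [Walk.mapLe, Walk.map_cons, walkWeight_cons] at ih ⊢
    rw [ih]
    rfl

lemma gDist_self (x : V) : gDist G ω x x = 0 :=
  nonpos_iff_eq_zero.mp (iInf_le_of_le .nil le_rfl)

lemma gDist_comm (hsymm : ∀ a b, ω a b = ω b a) (x y : V) :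
    gDist G ω x y = gDist G ω y x := by
  have h : ∀ x y : V, gDist G ω x y ≤ gDist G ω y x := fun x y =>
    le_iInf fun p => (iInf_le _ p.reverse).trans_eq (walkWeight_reverse ω hsymm p)
  exact (h x y).antisymm (h y x)

lemma gDist_le_add_of_adj {x w z : V} (h : G.Adj x w) :
    gDist G ω x z ≤ ω x w + gDist G ω w z := by
  simp only [gDist, ENNReal.add_iInf]
  exact le_iInf fun p => (iInf_le _ (Walk.cons h p)).trans_eq (walkWeight_cons ω h p)

lemma beerDist_le_walkWeight {B : Set V} {x y b : V} (p : G.Walk x y) (hb : b ∈ B)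
    (hbp : b ∈ p.support) : beerDist G ω B x y ≤ walkWeight ω p :=
  iInf₂_le p ⟨b, hb, hbp⟩

lemma restrictGraph_le (S : Set V) : restrictGraph G S ≤ G := fun _ _ h => h.1

lemma beerDist_le_beerDist_restrictGraph (B S : Set V) (x y : V) :
    beerDist G ω B x y ≤ beerDist (restrictGraph G S) ω (B ∩ S) x y :=
  le_iInf₂ fun q ⟨_, hb, hbq⟩ =>
    (beerDist_le_walkWeight ω (q.mapLe (restrictGraph_le S)) hb.1
      (by rwa [Walk.support_mapLe_eq_support])).trans_eq (walkWeight_mapLe ω _ q)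

def IsGeodesicClique (G : SimpleGraph V) (T : Set V) : Prop :=
  ∀ x ∈ T, ∀ z ∈ T, x ≠ z → G.Adj x z ∧ ω x z ≤ gDist G ω x z

lemma isGeodesicClique_pair (hsymm : ∀ a b, ω a b = ω b a) {u v : V} (huv : G.Adj u v)
    (hw : gDist G ω u v = ω u v) : IsGeodesicClique ω G {u, v} := by
  rintro x (rfl | rfl) z (rfl | rfl) hne
  · exact absurd rfl hne
  · exact ⟨huv, hw.ge⟩
  · exact ⟨huv.symm, by rw [hsymm, gDist_comm ω hsymm, hw]⟩
  · exact absurd rfl hne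

lemma restrictGraph_adj {S : Set V} {a b : V} (h : G.Adj a b) (ha : a ∈ S) (hb : b ∈ S) :
    (restrictGraph G S).Adj a b :=
  ⟨h, ha, hb⟩

lemma exists_restrictGraph_walk_le_gDist {S T : Set V}
    (hgeo : IsGeodesicClique ω G T) {x z : V} (hxS : x ∈ S) (hzS : z ∈ S)
    (hxT : x ∈ T) (hzT : z ∈ T) :
    ∃ e : (restrictGraph G S).Walk x z, walkWeight ω e ≤ gDist G ω x z := by
  by_cases hxz : x = z
  · subst hxz
    exact ⟨.nil, by simp⟩
  · obtain ⟨hadj, hle⟩ := hgeo x hxT z hzT hxz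
    exact ⟨.cons (restrictGraph_adj hadj hxS hzS) .nil, by simpa using hle⟩

/-- Strengthened for the induction: a walk starting outside `S` is projected from its first
vertex `z` in `S`, which lies in `T`. -/
lemma exists_entry_restrictGraph_walk {S T : Set V}
    (hT : ∀ a b, G.Adj a b → a ∉ S → b ∈ S → b ∈ T)
    (hgeo : IsGeodesicClique ω G T)
    {x y : V} (p : G.Walk x y) (hy : y ∈ S) :
    ∃ z ∈ S, (x ∈ S → z = x) ∧ (x ∉ S → z ∈ T) ∧
      ∃ q : (restrictGraph G S).Walk z y, gDist G ω x z + walkWeight ω q ≤ walkWeight ω p ∧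
      ∀ b ∈ S, b ∈ p.support → b ∈ q.support := by
  induction p with
  | nil =>
    exact ⟨_, hy, fun _ => rfl, fun h => absurd hy h, .nil, by simp [gDist_self], by simp⟩
  | @cons x w y h p ih =>
    obtain ⟨z, hzS, hz_eq, hzT, q, hq, hsupp⟩ := ih hy
    have hstep : ω x w + gDist G ω w z + walkWeight ω q ≤ walkWeight ω (.cons h p) := by
      rw [add_assoc, walkWeight_cons]
      gcongr
    by_cases hx : x ∈ S
    · obtain ⟨e, he⟩ : ∃ e : (restrictGraph G S).Walk x z,
          walkWeight ω e ≤ ω x w + gDist G ω w z := by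
        by_cases hw : w ∈ S
        · obtain rfl := hz_eq hw
          exact ⟨.cons (restrictGraph_adj h hx hw) .nil, by simp⟩
        · obtain ⟨e, he⟩ := exists_restrictGraph_walk_le_gDist ω hgeo hx hzS
            (hT w x h.symm hw hx) (hzT hw)
          exact ⟨e, he.trans (gDist_le_add_of_adj ω h)⟩
      refine ⟨x, hx, fun _ => rfl, fun h' => absurd hx h', e.append q, ?_, ?_⟩
      · rw [gDist_self, zero_add, walkWeight_append]
        exact le_trans (by gcongr) hstep
      · intro b hb hbp
        rw [Walk.mem_support_append_iff]
        rcases List.mem_cons.mp (Walk.support_cons h p ▸ hbp) with rfl | hbp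
        · exact .inl e.start_mem_support
        · exact .inr (hsupp b hb hbp)
    · have hzT' : z ∈ T := by
        by_cases hw : w ∈ S
        · obtain rfl := hz_eq hw
          exact hT x z h hx hw
        · exact hzT hw
      refine ⟨z, hzS, fun h' => absurd h' hx, fun _ => hzT', q, ?_, ?_⟩
      · exact le_trans (by gcongr; exact gDist_le_add_of_adj ω h) hstep
      · intro b hb hbp
        rcases List.mem_cons.mp (Walk.support_cons h p ▸ hbp) with rfl | hbp
        · exact absurd hb hx
        · exact hsupp b hb hbp

lemma exists_restrictGraph_walk_le {S T : Set V}
    (hT : ∀ a b, G.Adj a b → a ∉ S → b ∈ S → b ∈ T)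
    (hgeo : IsGeodesicClique ω G T)
    {x y : V} (hx : x ∈ S) (hy : y ∈ S) (p : G.Walk x y) :
    ∃ q : (restrictGraph G S).Walk x y, walkWeight ω q ≤ walkWeight ω p ∧
      ∀ b ∈ S, b ∈ p.support → b ∈ q.support := by
  obtain ⟨z, -, hz, -, q, hq, hsupp⟩ := exists_entry_restrictGraph_walk ω hT hgeo p hy
  obtain rfl := hz hx
  exact ⟨q, le_add_self.trans hq, hsupp⟩

lemma beerDist_restrictGraph_le_walkWeight {B S T : Set V}
    (hT : ∀ a b, G.Adj a b → a ∉ S → b ∈ S → b ∈ T)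
    (hgeo : IsGeodesicClique ω G T)
    {x y b : V} (hx : x ∈ S) (hy : y ∈ S) (p : G.Walk x y) (hb : b ∈ B ∩ S)
    (hbp : b ∈ p.support) :
    beerDist (restrictGraph G S) ω (B ∩ S) x y ≤ walkWeight ω p := by
  obtain ⟨q, hq, hsupp⟩ := exists_restrictGraph_walk_le ω hT hgeo hx hy p
  exact (beerDist_le_walkWeight ω q hb (hsupp b hb.2 hbp)).trans hq

lemma mem_of_adj_of_notMem {V₁ V₂ : Set V} (hunion : V₁ ∪ V₂ = Set.univ)
    (hsep : ∀ a b, G.Adj a b → a ∈ V₁ \ V₂ → b ∈ V₂ \ V₁ → False)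
    {a b : V} (hab : G.Adj a b) (ha : a ∉ V₁) (hb : b ∈ V₁) : b ∈ V₂ := by
  have ha₂ : a ∈ V₂ := (Set.eq_univ_iff_forall.mp hunion a).resolve_left ha
  by_contra hb₂
  exact hsep b a hab.symm ⟨hb, hb₂⟩ ⟨ha₂, ha⟩

lemma beerDist_eq_min_restrictGraph (B : Set V) {V₁ V₂ : Set V}
    (hunion : V₁ ∪ V₂ = Set.univ)
    (hsep : ∀ a b, G.Adj a b → a ∈ V₁ \ V₂ → b ∈ V₂ \ V₁ → False)
    (hgeo : IsGeodesicClique ω G (V₁ ∩ V₂))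
    {x y : V} (hx : x ∈ V₁ ∩ V₂) (hy : y ∈ V₁ ∩ V₂) :
    beerDist G ω B x y =
      min (beerDist (restrictGraph G V₁) ω (B ∩ V₁) x y)
          (beerDist (restrictGraph G V₂) ω (B ∩ V₂) x y) := by
  refine le_antisymm (le_min (beerDist_le_beerDist_restrictGraph ω B V₁ x y)
    (beerDist_le_beerDist_restrictGraph ω B V₂ x y)) (le_iInf₂ fun p ⟨b, hb, hbp⟩ => ?_)
  have hT₁ : ∀ a b, G.Adj a b → a ∉ V₁ → b ∈ V₁ → b ∈ V₁ ∩ V₂ := fun _ _ hab ha hb =>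
    ⟨hb, mem_of_adj_of_notMem hunion hsep hab ha hb⟩
  have hT₂ : ∀ a b, G.Adj a b → a ∉ V₂ → b ∈ V₂ → b ∈ V₁ ∩ V₂ := fun _ _ hab ha hb =>
    ⟨mem_of_adj_of_notMem (Set.union_comm V₁ V₂ ▸ hunion)
      (fun a b hab ha hb => hsep b a hab.symm hb ha) hab ha hb, hb⟩
  rcases Set.eq_univ_iff_forall.mp hunion b with hb₁ | hb₂
  · exact (min_le_left _ _).trans <| beerDist_restrictGraph_le_walkWeight ω hT₁ hgeo
      hx.1 hy.1 p ⟨hb, hb₁⟩ hbp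
  · exact (min_le_right _ _).trans <| beerDist_restrictGraph_le_walkWeight ω hT₂ hgeo
      hx.2 hy.2 p ⟨hb, hb₂⟩ hbp

end

theorem beerDist_split_along_edge_general {V : Type*}
    (G : SimpleGraph V) (ω : V → V → ℝ≥0∞) (B : Set V)
    (hsymm : ∀ a b, ω a b = ω b a)
    (u v : V) (huv : G.Adj u v)
    (V₁ V₂ : Set V)
    (hunion : V₁ ∪ V₂ = Set.univ)
    (hinter : V₁ ∩ V₂ = {u, v})
    (hsep : ∀ a b, G.Adj a b → a ∈ V₁ \ {u, v} → b ∈ V₂ \ {u, v} → False)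
    (hw : gDist G ω u v = ω u v) :
    beerDist G ω B u v =
      min (beerDist (restrictGraph G V₁) ω (B ∩ V₁) u v)
          (beerDist (restrictGraph G V₂) ω (B ∩ V₂) u v) ∧
    beerDist G ω B u u =
      min (beerDist (restrictGraph G V₁) ω (B ∩ V₁) u u)
          (beerDist (restrictGraph G V₂) ω (B ∩ V₂) u u) := by
  have hsep' : ∀ a b, G.Adj a b → a ∈ V₁ \ V₂ → b ∈ V₂ \ V₁ → False := by
    rwa [← Set.sdiff_self_inter, hinter, ← Set.sdiff_inter_self_eq_sdiff (t := V₁), hinter]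
  have hgeo : IsGeodesicClique ω G (V₁ ∩ V₂) :=
    hinter ▸ isGeodesicClique_pair ω hsymm huv hw
  have hu : u ∈ V₁ ∩ V₂ := hinter ▸ Set.mem_insert u {v}
  have hv : v ∈ V₁ ∩ V₂ := hinter ▸ Set.mem_insert_of_mem u rfl
  exact ⟨beerDist_eq_min_restrictGraph ω B hunion hsep' hgeo hu hv,
    beerDist_eq_min_restrictGraph ω B hunion hsep' hgeo hu hu⟩

/-- If the vertex set splits as V₁ ∪ V₂ with V₁ ∩ V₂ = {u,v}, where (u,v)
is an edge, no edge joins V₁ \ {u,v} to V₂ \ {u,v}, and dist(u,v) = ω(u,v), then beer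
distances between u and v (and from u to itself) split over the two induced subgraphs. -/
theorem beerDist_split_along_edge {V : Type*} [Fintype V] [DecidableEq V]
    (G : SimpleGraph V) (ω : V → V → ℝ≥0∞) (B : Set V)
    (hsymm : ∀ a b, ω a b = ω b a)
    (hpos : ∀ a b, G.Adj a b → 0 < ω a b ∧ ω a b < ⊤)
    (u v : V) (huv : G.Adj u v)
    (V₁ V₂ : Set V)
    (hunion : V₁ ∪ V₂ = Set.univ)
    (hinter : V₁ ∩ V₂ = {u, v})
    (hsep : ∀ a b, G.Adj a b → a ∈ V₁ \ {u, v} → b ∈ V₂ \ {u, v} → False)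
    (hw : gDist G ω u v = ω u v) :
    beerDist G ω B u v =
      min (beerDist (restrictGraph G V₁) ω (B ∩ V₁) u v)
          (beerDist (restrictGraph G V₂) ω (B ∩ V₂) u v) ∧
    beerDist G ω B u u =
      min (beerDist (restrictGraph G V₁) ω (B ∩ V₁) u u)
          (beerDist (restrictGraph G V₂) ω (B ∩ V₂) u u) :=
  beerDist_split_along_edge_general G ω B hsymm u v huv V₁ V₂ hunion hinter hsep hw
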